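/- Let G be a hypergraph and let A, B ⊆ E(G) be two internally connected sets with bd(A) = bd(B). If A ∩ B ≠ ∅, then A = B. -/

import Mathlib

open scoped Classical

namespace Paper

variable {V : Type} {E : Type}

/-- Vertices covered by a set of hyperedges. -/
noncomputable def Vs (F : E → Finset V) (A : Finset E) : Finset V := A.biUnion F

/-- Boundary of `A` relative to a ground set of hyperedges. -/
noncomputable def bdIn (F : E → Finset V) (ground A : Finset E) : Finset V :=
  Vs F A ∩ Vs F (ground \ A)

/-- Boundary size. -/
noncomputable def lamIn (F : E → Finset V) (ground A : Finset E) : ℕ :=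
  (bdIn F ground A).card

/-- Interior. -/
noncomputable def intIn (F : E → Finset V) (ground A : Finset E) : Finset V :=
  Vs F A \ bdIn F ground A

/-- A set of hyperedges is well-linked. -/
def WellLinkedIn (F : E → Finset V) (ground A : Finset E) : Prop :=
  ∀ A1 A2 : Finset E, A1 ∪ A2 = A → A1 ∩ A2 = ∅ →
    lamIn F ground A ≤ lamIn F ground A1 ∨ lamIn F ground A ≤ lamIn F ground A2

/-- A nonempty set of hyperedges is internally connected. -/
def InternallyConnectedIn (F : E → Finset V) (ground A : Finset E) : Prop :=
  A.Nonempty ∧ ¬ ∃ B1 B2 : Finset E, B1 ∪ B2 = A ∧ B1 ∩ B2 = ∅ ∧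
    B1.Nonempty ∧ B2.Nonempty ∧
    bdIn F ground B1 ⊆ bdIn F ground A ∧ bdIn F ground B2 ⊆ bdIn F ground A

/-- Internal component: an inclusion-maximal internally connected subset. -/
def InternalComponentIn (F : E → Finset V) (ground B B' : Finset E) : Prop :=
  B' ⊆ B ∧ InternallyConnectedIn F ground B' ∧
    ∀ B'' : Finset E, B' ⊆ B'' → B'' ⊆ B → InternallyConnectedIn F ground B'' → B'' = B'

/-- A tree decomposition of the graph with adjacency `Adj` induced on vertex set `s`. -/
structure TreeDecompOn (Adj : V → V → Prop) (s : Finset V) where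
  ι : Type
  fin : Fintype ι
  tr : SimpleGraph ι
  isTree : tr.IsTree
  bag : ι → Finset V
  bag_sub : ∀ i, bag i ⊆ s
  cover_v : ∀ v ∈ s, ∃ i, v ∈ bag i
  cover_e : ∀ u ∈ s, ∀ v ∈ s, Adj u v → ∃ i, u ∈ bag i ∧ v ∈ bag i
  conn : ∀ v ∈ s, (tr.induce {i | v ∈ bag i}).Connected

/-- Treewidth (an integer, `-1` for the empty graph) of the graph
with adjacency `Adj` induced on the vertex set `s`. -/
noncomputable def tw (Adj : V → V → Prop) (s : Finset V) : ℤ :=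
  sInf {k : ℤ | ∃ D : TreeDecompOn Adj s, ∀ i, ((D.bag i).card : ℤ) ≤ k + 1}

/-- Minimum size of a treewidth-`η`-modulator of the graph induced on `s`. -/
noncomputable def twmodOn (Adj : V → V → Prop) (s : Finset V) (η : ℕ) : ℕ :=
  sInf {n : ℕ | ∃ X : Finset V, X ⊆ s ∧ X.card ≤ n ∧ tw Adj (s \ X) ≤ (η : ℤ)}

/-- Adjacency of the primal graph of a hypergraph. -/
def primalAdj (F : E → Finset V) : V → V → Prop :=
  fun u v => u ≠ v ∧ ∃ e : E, u ∈ F e ∧ v ∈ F e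

/-- Internal treewidth of a set of hyperedges. -/
noncomputable def itw [Fintype E] (F : E → Finset V) (A : Finset E) : ℤ :=
  tw (primalAdj F) (intIn F Finset.univ A)

/-- The hypergraph given by `F` is (isomorphic to) the support hypergraph of `G`:
it has exactly one hyperedge `{v}` for each vertex `v` and exactly one hyperedge
`{u, v}` for each edge `uv`, and no other hyperedges. -/
def IsSupport (G : SimpleGraph V) (F : E → Finset V) : Prop :=
  (∀ e : E, (∃ v : V, F e = {v}) ∨ (∃ u v : V, G.Adj u v ∧ F e = {u, v})) ∧
  (∀ v : V, ∃! e : E, F e = {v}) ∧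
  (∀ u v : V, G.Adj u v → ∃! e : E, F e = ({u, v} : Finset V))

/-- `H` is a topological minor of `G` using only vertices in `s`. -/
def IsTopMinorOn {α β : Type} (H : SimpleGraph α) (G : SimpleGraph β) (s : Set β) : Prop :=
  ∃ φ : α → β, (∀ a, φ a ∈ s) ∧ Function.Injective φ ∧
    ∃ P : ∀ u v : α, H.Adj u v → G.Walk (φ u) (φ v),
      (∀ u v (h : H.Adj u v), (P u v h).IsPath) ∧
      (∀ u v (h : H.Adj u v), ∀ w ∈ (P u v h).support, w ∈ s) ∧
      (∀ u v (h : H.Adj u v) (w : β), w ∈ (P u v h).support → w ≠ φ u → w ≠ φ v →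
        ∀ a : α, φ a ≠ w) ∧
      (∀ u v u' v' (h : H.Adj u v) (h' : H.Adj u' v'),
        (Sym2.mk u v : Sym2 α) ≠ Sym2.mk u' v' →
        ∀ w : β, w ∈ (P u v h).support → w ∈ (P u' v' h').support → w = φ u ∨ w = φ v)

/-- `H` is a topological minor of `G`. -/
def IsTopMinor {α β : Type} (H : SimpleGraph α) (G : SimpleGraph β) : Prop :=
  IsTopMinorOn H G Set.univ

/-- A rooted superbranch decomposition of a hypergraph with hyperedge type `E`:
a finite rooted tree (given by a parent map) whose leaves are in bijection with `E`
and in which every non-leaf node has at least two children. -/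
structure SBD (E : Type) [Fintype E] where
  ι : Type
  fin : Fintype ι
  root : ι
  par : ι → ι
  par_root : par root = root
  reach : ∀ i : ι, ∃ n : ℕ, par^[n] i = root
  leafMap : E → ι
  inj : Function.Injective leafMap
  map_leaf : ∀ (e : E) (j : ι), par j = leafMap e → j = leafMap e
  leaf_surj : ∀ i : ι, (∀ j : ι, par j = i → j = i) → ∃ e : E, leafMap e = i
  branch : ∀ i : ι, (∃ j : ι, par j = i ∧ j ≠ i) → 2 ≤ {j : ι | par j = i ∧ j ≠ i}.ncard

/-- The set `L[t]` of hyperedges assigned to leaves below `t`. -/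
noncomputable def SBD.Lset [Fintype E] (T : SBD E) (t : T.ι) : Finset E :=
  Finset.univ.filter fun e => ∃ n : ℕ, T.par^[n] (T.leafMap e) = t

/-- The children of the root. -/
noncomputable def SBD.chd [Fintype E] (T : SBD E) : Finset T.ι :=
  letI := T.fin
  Finset.univ.filter fun j => T.par j = T.root ∧ j ≠ T.root

/-- The vertex sets of the hyperedges of the torso of the root:
the hyperedge corresponding to a child `t` has vertex set `bd(L[t])`. -/
noncomputable def SBD.Ft [Fintype E] (T : SBD E) (F : E → Finset V) : T.ι → Finset V :=
  fun t => bdIn F Finset.univ (T.Lset t)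

/-- Downwards well-linkedness of a superbranch decomposition. -/
def DownWL [Fintype E] (F : E → Finset V) (T : SBD E) : Prop :=
  ∀ t : T.ι, WellLinkedIn F Finset.univ (T.Lset t)

/-- The adhesion size of the superbranch decomposition is at most `α`. -/
def AdhLE [Fintype E] (F : E → Finset V) (T : SBD E) (α : ℕ) : Prop :=
  ∀ t : T.ι, t ≠ T.root → lamIn F Finset.univ (T.Lset t) ≤ α

/-- A rooted tree decomposition (given by a root and a tree decomposition). -/
structure RTreeDecompOn (Adj : V → V → Prop) (s : Finset V) extends TreeDecompOn Adj s where
  root : ι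

/-- A `(k, c)`-protrusion decomposition exists. -/
def HasProtrusionDecomp (Adj : V → V → Prop) (s : Finset V) (k : ℝ) (c : ℕ) : Prop :=
  ∃ D : RTreeDecompOn Adj s,
    ((D.bag D.root).card : ℝ) ≤ k ∧
    ((D.tr.neighborSet D.root).ncard : ℝ) ≤ k ∧
    ∀ i, i ≠ D.root → (D.bag i).card ≤ c

/-- A finite simple graph on the vertex universe `ℕ`. -/
structure FGraph where
  verts : Finset ℕ
  Adj : ℕ → ℕ → Prop
  symm : ∀ u v, Adj u v → Adj v u
  loopless : ∀ u, ¬ Adj u u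
  supp : ∀ u v, Adj u v → u ∈ verts ∧ v ∈ verts

/-- The `SimpleGraph` of an `FGraph`. -/
def FGraph.toSG (G : FGraph) : SimpleGraph ℕ where
  Adj := G.Adj
  symm := ⟨fun u v h => G.symm u v h⟩
  loopless := ⟨fun u h => G.loopless u h⟩

/-- A rooted tree decomposition, with the rooted tree given by a parent map and
connectivity phrased for rooted trees. -/
structure RootedTD (Adj : V → V → Prop) (s : Finset V) where
  ι : Type
  fin : Fintype ι
  root : ι
  par : ι → ι
  par_root : par root = root
  reach : ∀ i : ι, ∃ n : ℕ, par^[n] i = root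
  bag : ι → Finset V
  bag_sub : ∀ i, bag i ⊆ s
  cover_v : ∀ v ∈ s, ∃ i, v ∈ bag i
  cover_e : ∀ u ∈ s, ∀ v ∈ s, Adj u v → ∃ i, u ∈ bag i ∧ v ∈ bag i
  conn : ∀ v ∈ s, ∃ m : ι, v ∈ bag m ∧ ∀ i : ι, v ∈ bag i →
    ∃ n : ℕ, par^[n] i = m ∧ ∀ l ≤ n, v ∈ bag (par^[l] i)

/-!
If `bd(A) = bd(B)`, then `B` splits into `A ∩ B` and `B \ A`, and the boundary of each part
lies in `bd(A) ∪ bd(B) = bd(B)`. Internal connectivity of `B` forces one part to be empty;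
as `A ∩ B ≠ ∅`, this gives `B ⊆ A`, and symmetrically `A ⊆ B`.
-/

section Boundary

variable {V E : Type} (F : E → Finset V) {ground A B : Finset E}

lemma mem_Vs {v : V} : v ∈ Vs F A ↔ ∃ e ∈ A, v ∈ F e := by
  simp [Vs]

lemma mem_bdIn {v : V} :
    v ∈ bdIn F ground A ↔
      (∃ e ∈ A, v ∈ F e) ∧ ∃ e ∈ ground, e ∉ A ∧ v ∈ F e := by
  simp [bdIn, mem_Vs, and_assoc]

lemma bdIn_inter_subset_union :
    bdIn F ground (A ∩ B) ⊆ bdIn F ground A ∪ bdIn F ground B := by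
  intro v hv
  obtain ⟨⟨e, he, hve⟩, f, hf, hfAB, hvf⟩ := (mem_bdIn F).1 hv
  rw [Finset.mem_inter] at he
  rw [Finset.mem_union, mem_bdIn, mem_bdIn]
  by_cases hfA : f ∈ A
  · have hfB : f ∉ B := fun hfB ↦ hfAB (Finset.mem_inter.2 ⟨hfA, hfB⟩)
    exact Or.inr ⟨⟨e, he.2, hve⟩, f, hf, hfB, hvf⟩
  · exact Or.inl ⟨⟨e, he.1, hve⟩, f, hf, hfA, hvf⟩

lemma bdIn_sdiff_subset_union (hB : B ⊆ ground) :
    bdIn F ground (B \ A) ⊆ bdIn F ground A ∪ bdIn F ground B := by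
  intro v hv
  obtain ⟨⟨e, he, hve⟩, f, hf, hfBA, hvf⟩ := (mem_bdIn F).1 hv
  rw [Finset.mem_sdiff] at he
  rw [Finset.mem_union, mem_bdIn, mem_bdIn]
  by_cases hfB : f ∈ B
  · have hfA : f ∈ A := by_contra fun hfA ↦ hfBA (Finset.mem_sdiff.2 ⟨hfB, hfA⟩)
    exact Or.inl ⟨⟨f, hfA, hvf⟩, e, hB he.1, he.2, hve⟩
  · exact Or.inr ⟨⟨e, he.1, hve⟩, f, hf, hfB, hvf⟩

end Boundary

lemma InternallyConnectedIn.subset_of_bdIn_eq {V E : Type} {F : E → Finset V}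
    {ground A B : Finset E} (hB : InternallyConnectedIn F ground B) (hBg : B ⊆ ground)
    (hbd : bdIn F ground A = bdIn F ground B) (hmeet : (A ∩ B).Nonempty) : B ⊆ A := by
  by_contra hBA
  refine hB.2 ⟨A ∩ B, B \ A, ?_, ?_, hmeet, Finset.sdiff_nonempty.2 hBA, ?_, ?_⟩
  · rw [Finset.union_comm, Finset.inter_comm, Finset.sdiff_union_inter]
  · rw [Finset.inter_comm A B, Finset.inter_assoc, Finset.inter_sdiff_self, Finset.inter_empty]
  · simpa only [hbd, Finset.union_self] using
      bdIn_inter_subset_union F (ground := ground) (A := A) (B := B)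
  · simpa only [hbd, Finset.union_self] using bdIn_sdiff_subset_union F (A := A) hBg

theorem statement3_general {V E : Type} [Fintype E] (F : E → Finset V)
    (A B : Finset E)
    (hA : InternallyConnectedIn F Finset.univ A)
    (hB : InternallyConnectedIn F Finset.univ B)
    (hbd : bdIn F Finset.univ A = bdIn F Finset.univ B)
    (hmeet : (A ∩ B).Nonempty) :
    A = B :=
  Finset.Subset.antisymm
    (hA.subset_of_bdIn_eq (Finset.subset_univ A) hbd.symm (Finset.inter_comm A B ▸ hmeet))
    (hB.subset_of_bdIn_eq (Finset.subset_univ B) hbd hmeet)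

/-- two intersecting internally connected sets with the same boundary
are equal. -/
theorem statement3 {V E : Type} [Fintype V] [Fintype E] (F : E → Finset V)
    (A B : Finset E)
    (hA : InternallyConnectedIn F Finset.univ A)
    (hB : InternallyConnectedIn F Finset.univ B)
    (hbd : bdIn F Finset.univ A = bdIn F Finset.univ B)
    (hmeet : (A ∩ B).Nonempty) :
    A = B :=
  statement3_general F A B hA hB hbd hmeet

end Paper
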